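/- arXiv:2310.11091 — 2 statements merged into one kernel-verified Lean document; each statement's English description precedes it below -/
import Mathlib

section
/- Let $r,q\ge 1$, $n=qr+1$, and $1\le m_1,\dots,m_{r-1}\le q$. Let $T$ be an $n\times r$ array with entries in $\{1,\dots,n\}$ satisfying: rows strictly increasing, columns weakly increasing, every value appears exactly $r$ times, $T(n,j)\le jq+1$ for all $j$, and $T(1,j)\ge (j-2)q+m_{j-1}+1$ for $2\le j\le r$. Then for every row index $i$ and every $2\le j\le r$, the row entries $T(i,j-1)$ and $T(i,j)$ do not both lie in the interval $[(j-2)q+m_{j-1}+1,\,(j-1)q+1]$. -/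
private lemma col_fiber (n r : ℕ) (P : ℕ × ℕ → Prop) [DecidablePred P] :
    (((Finset.Icc 1 n) ×ˢ (Finset.Icc 1 r)).filter P).card
      = ∑ j ∈ Finset.Icc 1 r, ((Finset.Icc 1 n).filter fun i => P (i, j)).card := by
  rw [Finset.card_eq_sum_card_fiberwise
      (f := Prod.snd) (t := Finset.Icc 1 r)
      (fun p hp => (Finset.mem_product.mp (Finset.mem_filter.mp hp).1).2)]
  refine Finset.sum_congr rfl fun j hj => ?_
  have hinj : Function.Injective (fun i : ℕ => (i, j)) := by
    intro a b hab
    simpa using congrArg Prod.fst hab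
  have himg : (((Finset.Icc 1 n) ×ˢ (Finset.Icc 1 r)).filter P).filter (fun p => p.2 = j)
      = ((Finset.Icc 1 n).filter fun i => P (i, j)).image (fun i => (i, j)) := by
    ext ⟨a, b⟩
    simp only [Finset.mem_filter, Finset.mem_product, Finset.mem_image, Prod.mk.injEq]
    constructor
    · rintro ⟨⟨⟨ha, hb⟩, hP⟩, rfl⟩
      exact ⟨a, ⟨ha, hP⟩, rfl, rfl⟩
    · rintro ⟨x, ⟨hx, hP⟩, rfl, rfl⟩
      exact ⟨⟨⟨hx, hj⟩, hP⟩, rfl⟩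
  rw [himg, Finset.card_image_of_injective _ hinj]

private lemma val_fiber (n r a b : ℕ) (T : ℕ → ℕ → ℕ)
    (hcount : ∀ t : ℕ, a ≤ t → t ≤ b →
      (((Finset.Icc 1 n) ×ˢ (Finset.Icc 1 r)).filter (fun p => T p.1 p.2 = t)).card = r) :
    (((Finset.Icc 1 n) ×ˢ (Finset.Icc 1 r)).filter
        (fun p => a ≤ T p.1 p.2 ∧ T p.1 p.2 ≤ b)).card = (b + 1 - a) * r := by
  rw [Finset.card_eq_sum_card_fiberwise
      (f := fun p : ℕ × ℕ => T p.1 p.2) (t := Finset.Icc a b)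
      (fun p hp => Finset.mem_Icc.mpr (Finset.mem_filter.mp hp).2)]
  have h : ∀ t ∈ Finset.Icc a b,
      ((((Finset.Icc 1 n) ×ˢ (Finset.Icc 1 r)).filter
        (fun p => a ≤ T p.1 p.2 ∧ T p.1 p.2 ≤ b)).filter (fun p => T p.1 p.2 = t)).card = r := by
    intro t ht
    obtain ⟨ht1, ht2⟩ := Finset.mem_Icc.mp ht
    rw [Finset.filter_filter]
    rw [Finset.filter_congr (q := fun p => T p.1 p.2 = t)
      (fun p _ => ⟨fun h => h.2, fun h => ⟨⟨by omega, by omega⟩, h⟩⟩)]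
    exact hcount t ht1 ht2
  rw [Finset.sum_congr rfl h, Finset.sum_const, smul_eq_mul, Nat.card_Icc]

private lemma sum_split (r p : ℕ) (g : ℕ → ℕ) (A B : ℕ) (hp1 : 1 ≤ p) (hpr : p ≤ r)
    (hA : ∀ x, 1 ≤ x → x < p → g x = A) (hB : ∀ x, p < x → x ≤ r → g x = B) :
    ∑ x ∈ Finset.Icc 1 r, g x = (p - 1) * A + g p + (r - p) * B := by
  have e : Finset.Icc 1 r = (Finset.Icc 1 (p-1) ∪ insert p (Finset.Icc (p+1) r)) := by
    ext x
    simp only [Finset.mem_Icc, Finset.mem_union, Finset.mem_insert]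
    omega
  have hd : Disjoint (Finset.Icc 1 (p-1)) (insert p (Finset.Icc (p+1) r)) := by
    simp only [Finset.disjoint_left, Finset.mem_Icc, Finset.mem_insert]
    intro x hx
    omega
  have hnm : p ∉ Finset.Icc (p+1) r := by
    simp only [Finset.mem_Icc]
    omega
  rw [e, Finset.sum_union hd, Finset.sum_insert hnm,
      Finset.sum_congr rfl (fun x hx => hA x (Finset.mem_Icc.mp hx).1
        (by have := (Finset.mem_Icc.mp hx).2; omega)),
      Finset.sum_congr rfl (fun x hx => hB x
        (by have := (Finset.mem_Icc.mp hx).1; omega) (Finset.mem_Icc.mp hx).2),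
      Finset.sum_const, Finset.sum_const, smul_eq_mul, smul_eq_mul, Nat.card_Icc, Nat.card_Icc,
      show p - 1 + 1 - 1 = p - 1 from by omega, show r + 1 - (p+1) = r - p from by omega]
  ring

/-- Lemma 5.4 of the paper (degree one): in a row of a balanced standard tableau
supported on `X^{v_m}_{w_{r,n}}`, the entries in columns `j-1` and `j` do not
both lie in the interval `[(j-2)q+m_{j-1}+1, (j-1)q+1]`. -/
theorem consecutive_entries_not_both_in_interval
    (r q : ℕ) (hr : 0 < r) (hq : 0 < q) (n : ℕ) (hn : n = q * r + 1)
    (m : ℕ → ℕ) (hm : ∀ i : ℕ, 1 ≤ i → i ≤ r - 1 → 1 ≤ m i ∧ m i ≤ q)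
    (T : ℕ → ℕ → ℕ)
    (hentries : ∀ i j : ℕ, 1 ≤ i → i ≤ n → 1 ≤ j → j ≤ r → 1 ≤ T i j ∧ T i j ≤ n)
    (hrows : ∀ i j : ℕ, 1 ≤ i → i ≤ n → 1 ≤ j → j < r → T i j < T i (j + 1))
    (hcols : ∀ i j : ℕ, 1 ≤ i → i < n → 1 ≤ j → j ≤ r → T i j ≤ T (i + 1) j)
    (hcount : ∀ t : ℕ, 1 ≤ t → t ≤ n →
      (((Finset.Icc 1 n) ×ˢ (Finset.Icc 1 r)).filter
        (fun p => T p.1 p.2 = t)).card = r)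
    (hlast : ∀ j : ℕ, 1 ≤ j → j ≤ r → T n j ≤ j * q + 1)
    (hfirst : ∀ j : ℕ, 2 ≤ j → j ≤ r → (j - 2) * q + m (j - 1) + 1 ≤ T 1 j) :
    ∀ i j : ℕ, 1 ≤ i → i ≤ n → 2 ≤ j → j ≤ r →
      ¬((j - 2) * q + m (j - 1) + 1 ≤ T i (j - 1) ∧ T i (j - 1) ≤ (j - 1) * q + 1 ∧
        (j - 2) * q + m (j - 1) + 1 ≤ T i j ∧ T i j ≤ (j - 1) * q + 1) := by
  intro i j hi1 hin hj2 hjr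
  rintro ⟨h1, h2, h3, h4⟩
  -- column monotonicity (transitive closure of `hcols`)
  have colmono : ∀ j', 1 ≤ j' → j' ≤ r → ∀ i2, i2 ≤ n → ∀ i1, 1 ≤ i1 → i1 ≤ i2 →
      T i1 j' ≤ T i2 j' := by
    intro j' hj'1 hj'r i2
    induction i2 with
    | zero => intro _ i1 ha hb; omega
    | succ k ih =>
      intro hk i1 ha hb
      rcases Nat.lt_or_ge i1 (k+1) with h | h
      · exact le_trans (ih (by omega) i1 ha (by omega))
          (hcols k j' (by omega) (by omega) hj'1 hj'r)
      · have : i1 = k + 1 := by omega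
        rw [this]
  have hm1 : 1 ≤ m (j-1) := (hm (j-1) (by omega) (by omega)).1
  have hm2 : m (j-1) ≤ q := (hm (j-1) (by omega) (by omega)).2
  have hβn : (j-1)*q + 1 ≤ n := by
    have hjq : (j-1)*q ≤ q*r := by
      calc (j-1)*q ≤ r*q := Nat.mul_le_mul (by omega) (le_refl q)
      _ = q*r := Nat.mul_comm r q
    rw [hn]
    exact Nat.add_le_add_right hjq 1
  have hα1 : 1 ≤ (j-2)*q + m (j-1) + 1 := Nat.le_add_left 1 _
  -- total count of entries ≤ β
  have e1 : ((Finset.Icc 1 n) ×ˢ (Finset.Icc 1 r)).filter (fun p => T p.1 p.2 ≤ (j-1)*q+1)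
      = ((Finset.Icc 1 n) ×ˢ (Finset.Icc 1 r)).filter
          (fun p => 1 ≤ T p.1 p.2 ∧ T p.1 p.2 ≤ (j-1)*q+1) := by
    apply Finset.filter_congr
    intro p hp
    obtain ⟨hp1, hp2⟩ := Finset.mem_product.mp hp
    obtain ⟨ha, hb⟩ := Finset.mem_Icc.mp hp1
    obtain ⟨hc', hd'⟩ := Finset.mem_Icc.mp hp2
    have := (hentries p.1 p.2 ha hb hc' hd').1
    exact ⟨fun h => ⟨this, h⟩, And.right⟩
  have count1 : (((Finset.Icc 1 n) ×ˢ (Finset.Icc 1 r)).filter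
      (fun p => T p.1 p.2 ≤ (j-1)*q+1)).card = ((j-1)*q+1) * r := by
    rw [e1, val_fiber n r 1 ((j-1)*q+1) T (fun t ht1 ht2 => hcount t ht1 (le_trans ht2 hβn)),
      Nat.add_sub_cancel]
  -- total count of entries ≥ α
  have e2 : ((Finset.Icc 1 n) ×ˢ (Finset.Icc 1 r)).filter
        (fun p => (j-2)*q + m (j-1) + 1 ≤ T p.1 p.2)
      = ((Finset.Icc 1 n) ×ˢ (Finset.Icc 1 r)).filter
          (fun p => (j-2)*q + m (j-1) + 1 ≤ T p.1 p.2 ∧ T p.1 p.2 ≤ n) := by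
    apply Finset.filter_congr
    intro p hp
    obtain ⟨hp1, hp2⟩ := Finset.mem_product.mp hp
    obtain ⟨ha, hb⟩ := Finset.mem_Icc.mp hp1
    obtain ⟨hc', hd'⟩ := Finset.mem_Icc.mp hp2
    have := (hentries p.1 p.2 ha hb hc' hd').2
    exact ⟨fun h => ⟨h, this⟩, And.left⟩
  have count2 : (((Finset.Icc 1 n) ×ˢ (Finset.Icc 1 r)).filter
      (fun p => (j-2)*q + m (j-1) + 1 ≤ T p.1 p.2)).card
      = (n + 1 - ((j-2)*q + m (j-1) + 1)) * r := by
    rw [e2, val_fiber n r ((j-2)*q + m (j-1) + 1) n T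
      (fun t ht1 ht2 => hcount t (le_trans hα1 ht1) ht2)]
  -- columns before j are entirely ≤ β
  have hA1 : ∀ x, 1 ≤ x → x < j →
      ((Finset.Icc 1 n).filter fun i' => T i' x ≤ (j-1)*q+1).card = n := by
    intro x hx1 hxj
    have hall : ∀ y ∈ Finset.Icc 1 n, T y x ≤ (j-1)*q+1 := by
      intro y hy
      obtain ⟨hy1, hy2⟩ := Finset.mem_Icc.mp hy
      have hle : T y x ≤ T n x := colmono x hx1 (by omega) n (le_refl n) y hy1 hy2
      have hl := hlast x hx1 (by omega)
      have hxq : x * q ≤ (j-1) * q := Nat.mul_le_mul (by omega) (le_refl q)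
      linarith
    rw [Finset.filter_true_of_mem hall, Nat.card_Icc, Nat.add_sub_cancel]
  -- columns after j have no entry ≤ β
  have hB1 : ∀ x, j < x → x ≤ r →
      ((Finset.Icc 1 n).filter fun i' => T i' x ≤ (j-1)*q+1).card = 0 := by
    intro x hxj hxr
    rw [Finset.card_eq_zero, Finset.filter_eq_empty_iff]
    intro y hy
    obtain ⟨hy1, hy2⟩ := Finset.mem_Icc.mp hy
    have hf : T 1 x ≤ T y x := colmono x (by omega) hxr y hy2 1 le_rfl hy1
    have h2' := hfirst x (by omega) hxr
    have hm' : 1 ≤ m (x-1) := (hm (x-1) (by omega) (by omega)).1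
    have hq' : (j-1)*q ≤ (x-2)*q := Nat.mul_le_mul (by omega) (le_refl q)
    intro hcon
    linarith
  -- columns before j-1 have no entry ≥ α
  have hA2 : ∀ x, 1 ≤ x → x < j-1 →
      ((Finset.Icc 1 n).filter fun i' => (j-2)*q + m (j-1) + 1 ≤ T i' x).card = 0 := by
    intro x hx1 hxj
    rw [Finset.card_eq_zero, Finset.filter_eq_empty_iff]
    intro y hy
    obtain ⟨hy1, hy2⟩ := Finset.mem_Icc.mp hy
    have hle : T y x ≤ T n x := colmono x hx1 (by omega) n (le_refl n) y hy1 hy2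
    have hl := hlast x hx1 (by omega)
    have hxq : x * q ≤ (j-2) * q := Nat.mul_le_mul (by omega) (le_refl q)
    intro hcon
    linarith
  -- columns from j on are entirely ≥ α
  have hB2 : ∀ x, j-1 < x → x ≤ r →
      ((Finset.Icc 1 n).filter fun i' => (j-2)*q + m (j-1) + 1 ≤ T i' x).card = n := by
    intro x hxj hxr
    have hall : ∀ y ∈ Finset.Icc 1 n, (j-2)*q + m (j-1) + 1 ≤ T y x := by
      intro y hy
      obtain ⟨hy1, hy2⟩ := Finset.mem_Icc.mp hy
      have hf : T 1 x ≤ T y x := colmono x (by omega) hxr y hy2 1 le_rfl hy1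
      rcases Nat.eq_or_lt_of_le (show j ≤ x by omega) with rfl | hlt
      · have h2' := hfirst j hj2 hjr
        linarith
      · have h2' := hfirst x (by omega) hxr
        have hq' : (j-1)*q ≤ (x-2)*q := Nat.mul_le_mul (by omega) (le_refl q)
        have hstep : (j-1)*q = (j-2)*q + q := by
          rw [show j - 1 = (j-2)+1 from by omega, Nat.succ_mul]
        linarith
    rw [Finset.filter_true_of_mem hall, Nat.card_Icc, Nat.add_sub_cancel]
  -- combine the counts
  have hsplit1 := sum_split r j
    (fun x => ((Finset.Icc 1 n).filter fun i' => T i' x ≤ (j-1)*q+1).card)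
    n 0 (by omega) hjr hA1 hB1
  have hcf1 := col_fiber n r (fun p => T p.1 p.2 ≤ (j-1)*q+1)
  have hsum1 : (j-1)*n + ((Finset.Icc 1 n).filter fun i' => T i' j ≤ (j-1)*q+1).card
      + (r-j)*0 = ((j-1)*q+1)*r := hsplit1.symm.trans (hcf1.symm.trans count1)
  rw [Nat.mul_zero, Nat.add_zero] at hsum1
  have hsplit2 := sum_split r (j-1)
    (fun x => ((Finset.Icc 1 n).filter fun i' => (j-2)*q + m (j-1) + 1 ≤ T i' x).card)
    0 n (by omega) (by omega) hA2 hB2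
  have hcf2 := col_fiber n r (fun p => (j-2)*q + m (j-1) + 1 ≤ T p.1 p.2)
  have hsum2 : (j-1-1)*0
      + ((Finset.Icc 1 n).filter fun i' => (j-2)*q + m (j-1) + 1 ≤ T i' (j-1)).card
      + (r-(j-1))*n = (n + 1 - ((j-2)*q + m (j-1) + 1))*r :=
    hsplit2.symm.trans (hcf2.symm.trans count2)
  rw [Nat.mul_zero, Nat.zero_add] at hsum2
  -- positional bounds from monotonicity
  have hic : i ≤ ((Finset.Icc 1 n).filter fun i' => T i' j ≤ (j-1)*q+1).card := by
    have hsub : Finset.Icc 1 i ⊆ (Finset.Icc 1 n).filter fun i' => T i' j ≤ (j-1)*q+1 := by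
      intro x hx
      obtain ⟨hx1, hx2⟩ := Finset.mem_Icc.mp hx
      exact Finset.mem_filter.mpr ⟨Finset.mem_Icc.mpr ⟨hx1, by omega⟩,
        le_trans (colmono j (by omega) hjr i hin x hx1 hx2) h4⟩
    calc i = (Finset.Icc 1 i).card := by rw [Nat.card_Icc, Nat.add_sub_cancel]
    _ ≤ _ := Finset.card_le_card hsub
  have hid : n + 1 - i
      ≤ ((Finset.Icc 1 n).filter fun i' => (j-2)*q + m (j-1) + 1 ≤ T i' (j-1)).card := by
    have hsub : Finset.Icc i n
        ⊆ (Finset.Icc 1 n).filter fun i' => (j-2)*q + m (j-1) + 1 ≤ T i' (j-1) := by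
      intro x hx
      obtain ⟨hx1, hx2⟩ := Finset.mem_Icc.mp hx
      exact Finset.mem_filter.mpr ⟨Finset.mem_Icc.mpr ⟨by omega, hx2⟩,
        le_trans h1 (colmono (j-1) (by omega) (by omega) x hx2 i hi1 hx1)⟩
    calc n + 1 - i = (Finset.Icc i n).card := (Nat.card_Icc i n).symm
    _ ≤ _ := Finset.card_le_card hsub
  -- final arithmetic
  obtain ⟨j', rfl⟩ : ∃ j', j = j' + 2 := ⟨j - 2, by omega⟩
  simp only [show j' + 2 - 1 = j' + 1 from rfl, show j' + 2 - 2 = j' from rfl]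
    at hsum1 hsum2 hic hid hm1 hm2
  obtain ⟨s, hs⟩ : ∃ s, r = j' + 2 + s := ⟨r - (j'+2), by omega⟩
  obtain ⟨v, hv⟩ : ∃ v, q = m (j'+1) + v := ⟨q - m (j'+1), by omega⟩
  obtain ⟨c, hcdef⟩ : ∃ c, ((Finset.Icc 1 n).filter fun i' => T i' (j'+2) ≤ (j'+1)*q+1).card = c :=
    ⟨_, rfl⟩
  obtain ⟨d, hddef⟩ : ∃ d,
      ((Finset.Icc 1 n).filter fun i' => j'*q + m (j'+1) + 1 ≤ T i' (j'+1)).card = d := ⟨_, rfl⟩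
  rw [hcdef] at hsum1 hic
  rw [hddef] at hsum2 hid
  have I1 : ((j'+1)*q+1)*r = (j'+1)*n + (s+1) := by rw [hn, hs]; ring
  rw [I1] at hsum1
  have hc : c = s + 1 := Nat.add_left_cancel hsum1
  have key : n + 1 = (j'*q + m (j'+1) + 1) + ((m (j'+1)+v)*s + m (j'+1) + 2*v + 1) := by
    rw [hn, hs, hv]; ring
  rw [show r - (j'+1) = s + 1 from by omega, key, Nat.add_sub_cancel_left] at hsum2
  have I2 : ((m (j'+1)+v)*s + m (j'+1) + 2*v + 1)*r = (s+1)*n + (v*r + (j'+1)) := by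
    rw [hn, hs, hv]; ring
  rw [I2, add_comm d ((s+1)*n)] at hsum2
  have hd : d = v*r + (j'+1) := Nat.add_left_cancel hsum2
  have F4 : q*r = m (j'+1) * r + v*r := by rw [hv, Nat.add_mul]
  have F5 : r ≤ m (j'+1) * r := by
    calc r = 1 * r := (one_mul r).symm
    _ ≤ m (j'+1) * r := Nat.mul_le_mul hm1 (le_refl r)
  obtain ⟨X, hX⟩ : ∃ X, m (j'+1) * r = X := ⟨_, rfl⟩
  rw [hX] at F4 F5
  obtain ⟨Y, hY⟩ : ∃ Y, v * r = Y := ⟨_, rfl⟩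
  rw [hY] at F4 hd
  obtain ⟨Z, hZ⟩ : ∃ Z, q * r = Z := ⟨_, rfl⟩
  rw [hZ] at F4 hn
  omega
end

section
/- Let $r,q\ge 1$, $n=qr+1$, $j$ with $2\le j\le r-1$, and $1\le m_1,\dots,m_{r-1}\le q$. Let $T$ be an $n\times r$ array satisfying: rows strictly increasing, columns weakly increasing, every value appears exactly $r$ times, $T(n,j')\le j'q+1$ for all $j'$, and $T(1,j')\ge (j'-2)q+m_{j'-1}+1$ for $2\le j'\le r$. Then $T(m,j-1)\le (j-2)q+m_{j-1}$ for all $m\le rm_{j-1}-j+2$, and $T(m,j-1)\ge (j-2)q+m_{j-1}+1$ for all $m\ge rm_{j-1}-j+3$. -/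
/-- Threshold statement for column `j-1` used in the proof of Lemma 5.4 of the
paper: the entries of column `j-1` of a degree-one balanced standard tableau
supported on `X^{v_m}_{w_{r,n}}` cross the value `(j-2)q + m_{j-1}` exactly at
row `r·m_{j-1} - j + 2`. -/
theorem column_threshold
    (r q : ℕ) (hr : 0 < r) (hq : 0 < q) (n : ℕ) (hn : n = q * r + 1)
    (m : ℕ → ℕ) (hm : ∀ i : ℕ, 1 ≤ i → i ≤ r - 1 → 1 ≤ m i ∧ m i ≤ q)
    (T : ℕ → ℕ → ℕ)
    (hentries : ∀ i j : ℕ, 1 ≤ i → i ≤ n → 1 ≤ j → j ≤ r → 1 ≤ T i j ∧ T i j ≤ n)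
    (hrows : ∀ i j : ℕ, 1 ≤ i → i ≤ n → 1 ≤ j → j < r → T i j < T i (j + 1))
    (hcols : ∀ i j : ℕ, 1 ≤ i → i < n → 1 ≤ j → j ≤ r → T i j ≤ T (i + 1) j)
    (hcount : ∀ t : ℕ, 1 ≤ t → t ≤ n →
      (((Finset.Icc 1 n) ×ˢ (Finset.Icc 1 r)).filter
        (fun p => T p.1 p.2 = t)).card = r)
    (hlast : ∀ j : ℕ, 1 ≤ j → j ≤ r → T n j ≤ j * q + 1)
    (hfirst : ∀ j : ℕ, 2 ≤ j → j ≤ r → (j - 2) * q + m (j - 1) + 1 ≤ T 1 j)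
    (j : ℕ) (hj2 : 2 ≤ j) (hjr : j ≤ r - 1) :
    (∀ i : ℕ, 1 ≤ i → i ≤ r * m (j - 1) + 2 - j → T i (j - 1) ≤ (j - 2) * q + m (j - 1)) ∧
    (∀ i : ℕ, r * m (j - 1) + 3 - j ≤ i → i ≤ n →
      (j - 2) * q + m (j - 1) + 1 ≤ T i (j - 1)) := by
  classical
  have hr3 : 3 ≤ r := by omega
  have hc1 : (1:ℕ) ≤ j - 1 := by omega
  obtain ⟨hm1, hm2⟩ := hm (j - 1) hc1 (by omega)
  set c := j - 1 with hc
  set t := (j - 2) * q + m c with ht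
  have hcr : c ≤ r := by omega
  have ht1 : 1 ≤ t := by omega
  have hn1 : 1 ≤ n := by
    have : 1 ≤ q * r := Nat.one_le_iff_ne_zero.mpr (by positivity)
    omega
  have htn : t ≤ n := by
    have h1 : t ≤ (j - 2) * q + q := by omega
    have h2 : (j - 2) * q + q = (j - 1) * q := by
      have hjj : j - 1 = (j - 2) + 1 := by omega
      rw [hjj, add_mul, one_mul]
    have h3 : (j - 1) * q ≤ r * q := Nat.mul_le_mul_right q (by omega)
    have h4 : r * q = q * r := Nat.mul_comm r q
    have : t ≤ q * r := by
      calc t ≤ (j - 1) * q := by omega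
        _ ≤ r * q := h3
        _ = q * r := h4
    omega
  -- column monotonicity
  have hmono : ∀ j' i i', 1 ≤ j' → j' ≤ r → 1 ≤ i → i ≤ i' → i' ≤ n → T i j' ≤ T i' j' := by
    intro j' i i' hj'1 hj'r hi1 hii
    induction i', hii using Nat.le_induction with
    | base => intro _; exact le_rfl
    | succ k hk ih =>
      intro hkn
      exact le_trans (ih (by omega)) (hcols k j' (by omega) (by omega) hj'1 hj'r)
  -- columns strictly left of c are entirely ≤ t
  have hFn : ∀ j', 1 ≤ j' → j' < c →
      ((Finset.Icc 1 n).filter (fun i => T i j' ≤ t)).card = n := by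
    intro j' h1 h2
    have heq : (Finset.Icc 1 n).filter (fun i => T i j' ≤ t) = Finset.Icc 1 n := by
      apply Finset.filter_true_of_mem
      intro i hi
      rw [Finset.mem_Icc] at hi
      have hA : T i j' ≤ T n j' := hmono j' i n h1 (by omega) hi.1 hi.2 le_rfl
      have hB : T n j' ≤ j' * q + 1 := hlast j' h1 (by omega)
      have hC : j' * q ≤ (j - 2) * q := Nat.mul_le_mul_right q (by omega)
      omega
    rw [heq, Nat.card_Icc]
    omega
  -- columns at c+1 and beyond are entirely > t
  have hF0 : ∀ j', c < j' → j' ≤ r →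
      ((Finset.Icc 1 n).filter (fun i => T i j' ≤ t)).card = 0 := by
    intro j' h1 h2
    rw [Finset.card_eq_zero, Finset.filter_eq_empty_iff]
    intro i hi
    rw [Finset.mem_Icc] at hi
    have hA : T 1 j' ≤ T i j' := hmono j' 1 i (by omega) h2 le_rfl hi.1 hi.2
    have hB : (j' - 2) * q + m (j' - 1) + 1 ≤ T 1 j' := hfirst j' (by omega) h2
    rcases eq_or_lt_of_le (show j ≤ j' by omega) with hjj | hjj
    · -- j' = j, so j' - 1 = c
      have : j' - 1 = c := by omega
      rw [this] at hB
      have : (j' - 2) * q = (j - 2) * q := by rw [← hjj]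
      omega
    · -- j' > j
      obtain ⟨hm1', _⟩ := hm (j' - 1) (by omega) (by omega)
      have hC : (j - 1) * q ≤ (j' - 2) * q := Nat.mul_le_mul_right q (by omega)
      have hD : (j - 2) * q + q = (j - 1) * q := by
        have hjj2 : j - 1 = (j - 2) + 1 := by omega
        rw [hjj2, add_mul, one_mul]
      omega
  set a := ((Finset.Icc 1 n).filter (fun i => T i c ≤ t)).card with ha
  -- global count: r copies of each of the t values
  have hsum1 : (((Finset.Icc 1 n) ×ˢ (Finset.Icc 1 r)).filter
      (fun p => T p.1 p.2 ≤ t)).card = t * r := by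
    have hsplit : ((Finset.Icc 1 n) ×ˢ (Finset.Icc 1 r)).filter (fun p => T p.1 p.2 ≤ t)
        = (Finset.Icc 1 t).biUnion (fun s =>
            ((Finset.Icc 1 n) ×ˢ (Finset.Icc 1 r)).filter (fun p => T p.1 p.2 = s)) := by
      ext p
      simp only [Finset.mem_biUnion, Finset.mem_filter, Finset.mem_Icc]
      constructor
      · rintro ⟨hp, hpt⟩
        rw [Finset.mem_product, Finset.mem_Icc, Finset.mem_Icc] at hp
        have := hentries p.1 p.2 hp.1.1 hp.1.2 hp.2.1 hp.2.2
        exact ⟨T p.1 p.2, ⟨this.1, hpt⟩, by rw [Finset.mem_product, Finset.mem_Icc, Finset.mem_Icc]; exact hp, rfl⟩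
      · rintro ⟨s, hs, hp, hps⟩
        exact ⟨hp, by omega⟩
    rw [hsplit, Finset.card_biUnion]
    · have : ∀ s ∈ Finset.Icc 1 t,
          (((Finset.Icc 1 n) ×ˢ (Finset.Icc 1 r)).filter (fun p => T p.1 p.2 = s)).card = r := by
        intro s hs
        rw [Finset.mem_Icc] at hs
        exact hcount s hs.1 (by omega)
      rw [Finset.sum_congr rfl this, Finset.sum_const, Nat.card_Icc, smul_eq_mul]
      norm_num
    · intro s hs s' hs' hss
      refine Finset.disjoint_left.mpr ?_
      intro p hp hp'
      rw [Finset.mem_filter] at hp hp'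
      exact hss (by rw [← hp.2, ← hp'.2])
  -- count columnwise
  have hsum2 : (((Finset.Icc 1 n) ×ˢ (Finset.Icc 1 r)).filter
      (fun p => T p.1 p.2 ≤ t)).card
      = ∑ j' ∈ Finset.Icc 1 r, ((Finset.Icc 1 n).filter (fun i => T i j' ≤ t)).card := by
    rw [Finset.card_filter, Finset.sum_product_right]
    refine Finset.sum_congr rfl (fun j' _ => ?_)
    rw [Finset.card_filter]
  have hsum3 : ∑ j' ∈ Finset.Icc 1 r, ((Finset.Icc 1 n).filter (fun i => T i j' ≤ t)).card
      = (c - 1) * n + a := by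
    have hcong : ∀ j' ∈ Finset.Icc 1 r,
        ((Finset.Icc 1 n).filter (fun i => T i j' ≤ t)).card
          = (if j' < c then n else 0) + (if j' = c then a else 0) := by
      intro j' hj'
      rw [Finset.mem_Icc] at hj'
      rcases lt_trichotomy j' c with h | h | h
      · rw [if_pos h, if_neg (by omega), hFn j' hj'.1 h, Nat.add_zero]
      · rw [if_neg (by omega), if_pos h, h, Nat.zero_add]
      · rw [if_neg (by omega), if_neg (by omega), hF0 j' h hj'.2]
    rw [Finset.sum_congr rfl hcong, Finset.sum_add_distrib]
    have h1 : ∑ j' ∈ Finset.Icc 1 r, (if j' < c then n else 0) = (c - 1) * n := by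
      rw [← Finset.sum_filter]
      have : (Finset.Icc 1 r).filter (fun j' => j' < c) = Finset.Icc 1 (c - 1) := by
        ext x
        simp only [Finset.mem_filter, Finset.mem_Icc]
        omega
      rw [this, Finset.sum_const, Nat.card_Icc, smul_eq_mul]
      have : c - 1 + 1 - 1 = c - 1 := by omega
      rw [this]
    have h2 : ∑ j' ∈ Finset.Icc 1 r, (if j' = c then a else 0) = a := by
      rw [Finset.sum_ite_eq' (Finset.Icc 1 r) c (fun _ => a),
        if_pos (by rw [Finset.mem_Icc]; omega)]
    rw [h1, h2]
  have hbal : t * r = (c - 1) * n + a := by rw [← hsum1, hsum2, hsum3]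
  -- extract the linear relation
  have hrm : r * m c = (j - 2) + a := by
    have e1 : t * r = (j - 2) * (q * r) + m c * r := by
      rw [ht, add_mul, mul_assoc]
    have e2 : (c - 1) * n = (j - 2) * (q * r) + (j - 2) := by
      rw [hn]
      have hcc : c - 1 = j - 2 := by omega
      rw [hcc, Nat.mul_add, mul_one]
    have h := hbal
    rw [e1, e2] at h
    have h' : (j - 2) * (q * r) + m c * r = (j - 2) * (q * r) + ((j - 2) + a) := by
      rw [h, add_assoc]
    have := Nat.add_left_cancel h'
    rw [mul_comm]
    exact this
  have han : a ≤ n := by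
    have := Finset.card_filter_le (Finset.Icc 1 n) (fun i => T i c ≤ t)
    rw [Nat.card_Icc] at this
    omega
  constructor
  · intro i hi1 hi2
    rw [hrm] at hi2
    have hia : i ≤ a := by omega
    have hin : i ≤ n := by omega
    by_contra hcon
    push_neg at hcon
    have hsub : (Finset.Icc 1 n).filter (fun i' => T i' c ≤ t) ⊆ Finset.Icc 1 (i - 1) := by
      intro x hx
      rw [Finset.mem_filter, Finset.mem_Icc] at hx
      rw [Finset.mem_Icc]
      refine ⟨hx.1.1, ?_⟩
      by_contra hxi
      push_neg at hxi
      have : T i c ≤ T x c := hmono c i x hc1 hcr hi1 (by omega) hx.1.2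
      omega
    have := Finset.card_le_card hsub
    rw [← ha, Nat.card_Icc] at this
    omega
  · intro i hi1 hi2
    rw [hrm] at hi1
    have hia : a + 1 ≤ i := by omega
    by_contra hcon
    push_neg at hcon
    have hTi : T i c ≤ t := by omega
    have hsub : Finset.Icc 1 i ⊆ (Finset.Icc 1 n).filter (fun i' => T i' c ≤ t) := by
      intro x hx
      rw [Finset.mem_Icc] at hx
      rw [Finset.mem_filter, Finset.mem_Icc]
      refine ⟨⟨hx.1, by omega⟩, ?_⟩
      exact le_trans (hmono c x i hc1 hcr hx.1 hx.2 hi2) hTi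
    have := Finset.card_le_card hsub
    rw [← ha, Nat.card_Icc] at this
    omega
end
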